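/- Model a 1-in-3 formula as a list of clauses, where each clause is a list of literals and a literal is a pair (v, s) of a variable v : ℕ and a sign s : Bool (s = true meaning the literal is negated); an assignment τ : ℕ → Bool satisfies the literal (v, s) if τ v ≠ s, and τ 1-in-3-satisfies the formula if in every clause exactly one literal is satisfied. Let φ be a formula, let C = [(x, true), ℓ₂, ℓ₃] be a clause containing the negated literal ¬x, and let x′ be a variable that occurs neither in φ nor in C and is distinct from x and from the variables of ℓ₂, ℓ₃. Then the formula φ together with the clause C is 1-in-3-satisfiable if and only if the formula φ together with the two clauses [(x′, false), ℓ₂, ℓ₃] and [(x′, false), (x, false)] is 1-in-3-satisfiable. -/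

import Mathlib

/-- A literal is a variable together with a sign (`true` meaning negated). -/
abbrev Literal : Type := ℕ × Bool

/-- An assignment satisfies the literal `(v, s)` if `τ v ≠ s`. -/
def SatLit (τ : ℕ → Bool) (l : Literal) : Bool := τ l.1 != l.2

/-- An assignment 1-in-3 satisfies a clause if exactly one literal is satisfied. -/
def SatClause (τ : ℕ → Bool) (c : List Literal) : Prop := c.countP (SatLit τ) = 1

/-- An assignment 1-in-3 satisfies a formula if it 1-in-3 satisfies every clause. -/
def SatFormula (τ : ℕ → Bool) (φ : List (List Literal)) : Prop :=
  ∀ c ∈ φ, SatClause τ c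

/-!
Given a 1-in-3 solution of the original formula, set `x' := ¬x`: then the clause `(x', x)`
holds and `x'` plays the role of `¬x` in `(x', ℓ₂, ℓ₃)`; freshness of `x'` keeps every other
clause untouched. Conversely, any 1-in-3 solution of `(x', x)` has `x' = ¬x`, so it already
satisfies `(¬x, ℓ₂, ℓ₃)`.
-/

open Function

@[simp]
lemma satLit_pos (τ : ℕ → Bool) (v : ℕ) : SatLit τ (v, false) = τ v := by
  simp [SatLit]

@[simp]
lemma satLit_neg (τ : ℕ → Bool) (v : ℕ) : SatLit τ (v, true) = !τ v := by
  simp [SatLit]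

lemma satLit_update_of_ne {τ : ℕ → Bool} {v : ℕ} {b : Bool} {l : Literal} (h : l.1 ≠ v) :
    SatLit (update τ v b) l = SatLit τ l := by
  simp [SatLit, update_of_ne h]

lemma satClause_congr {τ τ' : ℕ → Bool} {c : List Literal}
    (h : ∀ l ∈ c, SatLit τ l = SatLit τ' l) : SatClause τ c ↔ SatClause τ' c := by
  rw [SatClause, SatClause, List.countP_congr fun l hl => by rw [h l hl]]

lemma satClause_update_of_ne {τ : ℕ → Bool} {v : ℕ} {b : Bool} {c : List Literal}
    (h : ∀ l ∈ c, l.1 ≠ v) : SatClause (update τ v b) c ↔ SatClause τ c :=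
  satClause_congr fun l hl => satLit_update_of_ne (h l hl)

lemma satFormula_update_of_ne {τ : ℕ → Bool} {v : ℕ} {b : Bool} {φ : List (List Literal)}
    (h : ∀ c ∈ φ, ∀ l ∈ c, l.1 ≠ v) : SatFormula (update τ v b) φ ↔ SatFormula τ φ :=
  forall₂_congr fun c hc => satClause_update_of_ne (h c hc)

lemma satFormula_cons {τ : ℕ → Bool} {c : List Literal} {φ : List (List Literal)} :
    SatFormula τ (c :: φ) ↔ SatClause τ c ∧ SatFormula τ φ :=
  List.forall_mem_cons

lemma satClause_cons_congr {τ : ℕ → Bool} {l l' : Literal} {c : List Literal}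
    (h : SatLit τ l = SatLit τ l') : SatClause τ (l :: c) ↔ SatClause τ (l' :: c) := by
  simp only [SatClause, List.countP_cons, h]

lemma satClause_pair_iff {τ : ℕ → Bool} {l₁ l₂ : Literal} :
    SatClause τ [l₁, l₂] ↔ SatLit τ l₁ = !SatLit τ l₂ := by
  simp only [SatClause, List.countP_cons, List.countP_nil]
  cases SatLit τ l₁ <;> cases SatLit τ l₂ <;> simp

/-- Formula-level correctness of the reduction of Theorem 6: a clause
`(¬x, ℓ₂, ℓ₃)` may be replaced by the two clauses `(x', ℓ₂, ℓ₃)` and `(x', x)`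
with a fresh variable `x'`, preserving 1-in-3 satisfiability. -/
theorem replace_negated_clause (φ : List (List Literal)) (x x' : ℕ)
    (ℓ₂ ℓ₃ : Literal)
    (hfreshφ : ∀ c ∈ φ, ∀ l ∈ c, l.1 ≠ x')
    (hx : x ≠ x') (h₂ : ℓ₂.1 ≠ x') (h₃ : ℓ₃.1 ≠ x') :
    (∃ τ : ℕ → Bool, SatFormula τ ([(x, true), ℓ₂, ℓ₃] :: φ)) ↔
    (∃ τ : ℕ → Bool,
      SatFormula τ ([(x', false), ℓ₂, ℓ₃] :: [(x', false), (x, false)] :: φ)) := by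
  simp only [satFormula_cons]
  constructor
  · rintro ⟨τ, hC, hφ⟩
    have hfreshC : ∀ l ∈ [(x, true), ℓ₂, ℓ₃], l.1 ≠ x' := by simp [hx, h₂, h₃]
    refine ⟨update τ x' (!τ x), ?_, ?_, (satFormula_update_of_ne hfreshφ).2 hφ⟩
    · rw [satClause_cons_congr (l' := (x, true)) (by simp [hx]), satClause_update_of_ne hfreshC]
      exact hC
    · simp [satClause_pair_iff, hx]
  · rintro ⟨τ, hC, hpair, hφ⟩
    have hx' : SatLit τ (x', false) = SatLit τ (x, true) := by
      simpa [satClause_pair_iff] using hpair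
    exact ⟨τ, (satClause_cons_congr hx').1 hC, hφ⟩
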